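/- arXiv:1606.04218 — 3 statements merged into one kernel-verified Lean document; each statement's English description precedes it below -/
import Mathlib

section
/- Let X be a compact metric space, H a real Hilbert space, and φ : X → H a continuous map. Assume the kernel is universal in the sense that the set of functions {x ↦ ⟨f, φ(x)⟩_H : f ∈ H} is dense in the space C(X, ℝ) of continuous real functions on X with respect to the supremum norm. Let p and q be Borel probability measures on X, and let μ_p = ∫ φ dp and μ_q = ∫ φ dq denote the Bochner integrals (kernel mean embeddings). Then: (i) sup over f ∈ H with ‖f‖ ≤ 1 of (∫ ⟨f, φ(x)⟩ dp(x) − ∫ ⟨f, φ(x)⟩ dq(x)) equals ‖μ_p − μ_q‖_H; and (ii) this quantity equals 0 if and only if p = q. -/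
/-!
Since `⟪f, ·⟫` commutes with the Bochner integral, the mean discrepancy along `f` is
`⟪f, μ_p - μ_q⟫`, whose supremum over the unit ball is `‖μ_p - μ_q‖`, attained at the normalised
difference. If `μ_p = μ_q`, then `p` and `q` integrate every `⟪f, φ ·⟫` alike; integration against a
finite measure is continuous on `C(X, ℝ)`, so by universality they integrate every continuous
function alike, and finite Borel measures on a metric space are determined by such integrals.
-/

open MeasureTheory

theorem isGreatest_inner_closedBall_one {H : Type*} [NormedAddCommGroup H] [InnerProductSpace ℝ H]
    (v : H) : IsGreatest {r : ℝ | ∃ f : H, ‖f‖ ≤ 1 ∧ r = inner ℝ f v} ‖v‖ := by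
  refine ⟨⟨‖v‖⁻¹ • v, ?_, ?_⟩, ?_⟩
  · rw [norm_smul, norm_inv, norm_norm]
    exact inv_mul_le_one_of_le₀ le_rfl (norm_nonneg v)
  · rw [real_inner_smul_left, real_inner_self_eq_norm_mul_norm, ← mul_assoc, inv_mul_mul_self]
  · rintro r ⟨f, hf, rfl⟩
    calc inner ℝ f v ≤ ‖f‖ * ‖v‖ := real_inner_le_norm f v
      _ ≤ ‖v‖ := mul_le_of_le_one_left (norm_nonneg v) hf

theorem integral_inner_sub_integral_inner {X H : Type*} [MeasurableSpace X]
    [NormedAddCommGroup H] [InnerProductSpace ℝ H] [CompleteSpace H]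
    {φ : X → H} {p q : Measure X} (hp : Integrable φ p) (hq : Integrable φ q) (f : H) :
    (∫ x, inner ℝ f (φ x) ∂p) - ∫ x, inner ℝ f (φ x) ∂q
      = inner ℝ f ((∫ x, φ x ∂p) - ∫ x, φ x ∂q) := by
  rw [integral_inner hp, integral_inner hq, inner_sub_right]

theorem ContinuousMap.continuous_integral {X E : Type*} [TopologicalSpace X] [CompactSpace X]
    [MeasurableSpace X] [BorelSpace X] [NormedAddCommGroup E] [NormedSpace ℝ E] [CompleteSpace E]
    [SecondCountableTopologyEither X E] (μ : Measure X) [IsFiniteMeasure μ] :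
    Continuous fun g : C(X, E) => ∫ x, g x ∂μ := by
  have h : (fun g : C(X, E) => ∫ x, g x ∂μ) = fun g => ∫ x, ContinuousMap.toLp 1 μ ℝ g x ∂μ :=
    funext fun g => integral_congr_ae (ContinuousMap.coeFn_toLp μ g).symm
  rw [h]
  exact MeasureTheory.continuous_integral.comp (ContinuousMap.toLp 1 μ ℝ).continuous

theorem MeasureTheory.ext_of_forall_integral_eq_of_denseRange {X ι : Type*} [TopologicalSpace X]
    [CompactSpace X] [HasOuterApproxClosed X] [MeasurableSpace X] [BorelSpace X]
    {μ ν : Measure X} [IsFiniteMeasure μ] [IsFiniteMeasure ν] {g : ι → C(X, ℝ)}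
    (hg : DenseRange g) (h : ∀ i, ∫ x, g i x ∂μ = ∫ x, g i x ∂ν) : μ = ν := by
  have hall := hg.equalizer (ContinuousMap.continuous_integral μ)
    (ContinuousMap.continuous_integral ν) (funext h)
  exact ext_of_forall_integral_eq_of_IsFiniteMeasure fun f => congrFun hall f.toContinuousMap

/-- MMD with universal kernel: the sup over the unit ball equals the norm of the
difference of kernel mean embeddings, and it vanishes iff the measures coincide. -/
theorem mmd_eq_norm_mean_embedding_diff_and_zero_iff_eq
    {X : Type*} [MetricSpace X] [CompactSpace X] [MeasurableSpace X] [BorelSpace X]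
    {H : Type*} [NormedAddCommGroup H] [InnerProductSpace ℝ H] [CompleteSpace H]
    (φ : X → H) (hφ : Continuous φ)
    (huniv : DenseRange (fun f : H =>
      (⟨fun x => (inner ℝ f (φ x) : ℝ), continuous_const.inner hφ⟩ : C(X, ℝ))))
    (p q : Measure X) [IsProbabilityMeasure p] [IsProbabilityMeasure q] :
    sSup {r : ℝ | ∃ f : H, ‖f‖ ≤ 1 ∧
        r = (∫ x, (inner ℝ f (φ x) : ℝ) ∂p) - ∫ x, (inner ℝ f (φ x) : ℝ) ∂q}
      = ‖(∫ x, φ x ∂p) - ∫ x, φ x ∂q‖ ∧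
    (‖(∫ x, φ x ∂p) - ∫ x, φ x ∂q‖ = 0 ↔ p = q) := by
  have hint (μ : Measure X) [IsFiniteMeasure μ] : Integrable φ μ :=
    hφ.integrable_of_hasCompactSupport (HasCompactSupport.of_compactSpace φ)
  have hmmd := integral_inner_sub_integral_inner (hint p) (hint q)
  refine ⟨?_, ⟨fun h0 => ?_, fun hpq => by rw [hpq, sub_self, norm_zero]⟩⟩
  · simp_rw [hmmd]
    exact (isGreatest_inner_closedBall_one _).csSup_eq
  · refine ext_of_forall_integral_eq_of_denseRange huniv fun f => ?_
    have hf := hmmd f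
    rwa [norm_eq_zero.mp h0, inner_zero_right, sub_eq_zero] at hf
end

section
/- Let λ > 0 be real and let Φ_d ∈ ℝ^{p×N}, Υ_d ∈ ℝ^{q×N}, Φ_s ∈ ℝ^{p×M}, Υ_s ∈ ℝ^{q×M} be real matrices. Define K_d = Υ_dᵀΥ_d, K_s = Υ_sᵀΥ_s, L_d = Φ_dᵀΦ_d, L_s = Φ_sᵀΦ_s, K_{sd} = Υ_sᵀΥ_d, L_{ds} = Φ_dᵀΦ_s, K̃_d = K_d + λI_N, and K̃_s = K_s + λI_M. Then K̃_d and K̃_s are invertible, and the squared Frobenius norm satisfies ‖Φ_d K̃_d⁻¹ Υ_dᵀ − Φ_s K̃_s⁻¹ Υ_sᵀ‖²_F = Tr(K_d K̃_d⁻¹ L_d K̃_d⁻¹) + Tr(K_s K̃_s⁻¹ L_s K̃_s⁻¹) − 2 · Tr(K_{sd} K̃_d⁻¹ L_{ds} K̃_s⁻¹). -/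
/-!
Every term of the expanded square `‖A - B‖²_F = tr AᵀA + tr BᵀB - 2 tr AᵀB` has the shape
`tr ((Φ₁ P Υ₁ᵀ)ᵀ (Φ₂ Q Υ₂ᵀ))`; cycling `Υ₂ᵀ` to the front turns it into
`tr (Υ₂ᵀΥ₁ Pᵀ Φ₁ᵀΦ₂ Q)`, a trace of Gram matrices. The regularized Gram matrices are
positive definite, hence invertible with symmetric inverses, so `Pᵀ = P`.
-/

open Matrix

theorem posDef_transpose_mul_self_add_smul_one {m n : Type*} [Fintype m] [Fintype n]
    [DecidableEq n] {lam : ℝ} (hlam : 0 < lam) (Υ : Matrix m n ℝ) :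
    (Υᵀ * Υ + lam • (1 : Matrix n n ℝ)).PosDef :=
  PosDef.posSemidef_add (by simpa using Matrix.posSemidef_conjTranspose_mul_self Υ)
    (PosDef.one.smul hlam)

theorem isSymm_transpose_mul_self_add_smul_one {m n : Type*} [Fintype m] [DecidableEq n]
    (lam : ℝ) (Υ : Matrix m n ℝ) : (Υᵀ * Υ + lam • (1 : Matrix n n ℝ)).IsSymm := by
  simp only [IsSymm, transpose_add, transpose_smul, transpose_one, transpose_mul,
    transpose_transpose]

theorem trace_transpose_sub_mul_sub {m n R : Type*} [Fintype m] [Fintype n] [CommRing R]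
    (A B : Matrix m n R) :
    ((A - B)ᵀ * (A - B)).trace = (Aᵀ * A).trace + (Bᵀ * B).trace - 2 * (Aᵀ * B).trace := by
  have hBA : (Bᵀ * A).trace = (Aᵀ * B).trace := by
    rw [← trace_transpose, transpose_mul, transpose_transpose]
  rw [transpose_sub, Matrix.sub_mul, Matrix.mul_sub, Matrix.mul_sub, trace_sub, trace_sub,
    trace_sub, hBA]
  ring

theorem trace_transpose_mul_eq_trace_gram {p q k l R : Type*} [Fintype p] [Fintype q]
    [Fintype k] [Fintype l] [CommRing R]
    (Φ₁ : Matrix p k R) (P : Matrix k k R) (Υ₁ : Matrix q k R)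
    (Φ₂ : Matrix p l R) (Q : Matrix l l R) (Υ₂ : Matrix q l R) :
    ((Φ₁ * P * Υ₁ᵀ)ᵀ * (Φ₂ * Q * Υ₂ᵀ)).trace = (Υ₂ᵀ * Υ₁ * Pᵀ * (Φ₁ᵀ * Φ₂) * Q).trace := by
  simp only [transpose_mul, transpose_transpose, ← Matrix.mul_assoc]
  rw [trace_mul_comm]
  simp only [Matrix.mul_assoc]

/-- The empirical CMMD objective: the squared Frobenius norm (`Tr (AᵀA)`) of the
difference of two empirical conditional embedding operators, expressed purely in terms
of kernel Gram matrices. Also, the regularized Gram matrices are invertible. -/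
theorem cmmd_sq_eq_trace_form
    {p q N M : ℕ} {lam : ℝ} (hlam : 0 < lam)
    (Φd : Matrix (Fin p) (Fin N) ℝ) (Υd : Matrix (Fin q) (Fin N) ℝ)
    (Φs : Matrix (Fin p) (Fin M) ℝ) (Υs : Matrix (Fin q) (Fin M) ℝ)
    (Kd : Matrix (Fin N) (Fin N) ℝ) (Ks : Matrix (Fin M) (Fin M) ℝ)
    (Ld : Matrix (Fin N) (Fin N) ℝ) (Ls : Matrix (Fin M) (Fin M) ℝ)
    (Ksd : Matrix (Fin M) (Fin N) ℝ) (Lds : Matrix (Fin N) (Fin M) ℝ)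
    (Ktd : Matrix (Fin N) (Fin N) ℝ) (Kts : Matrix (Fin M) (Fin M) ℝ)
    (hKd : Kd = Υdᵀ * Υd) (hKs : Ks = Υsᵀ * Υs)
    (hLd : Ld = Φdᵀ * Φd) (hLs : Ls = Φsᵀ * Φs)
    (hKsd : Ksd = Υsᵀ * Υd) (hLds : Lds = Φdᵀ * Φs)
    (hKtd : Ktd = Kd + lam • (1 : Matrix (Fin N) (Fin N) ℝ))
    (hKts : Kts = Ks + lam • (1 : Matrix (Fin M) (Fin M) ℝ)) :
    IsUnit Ktd ∧ IsUnit Kts ∧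
    ((Φd * Ktd⁻¹ * Υdᵀ - Φs * Kts⁻¹ * Υsᵀ)ᵀ *
        (Φd * Ktd⁻¹ * Υdᵀ - Φs * Kts⁻¹ * Υsᵀ)).trace
      = (Kd * Ktd⁻¹ * Ld * Ktd⁻¹).trace + (Ks * Kts⁻¹ * Ls * Kts⁻¹).trace
        - 2 * (Ksd * Ktd⁻¹ * Lds * Kts⁻¹).trace := by
  subst hKd hKs hLd hLs hKsd hLds hKtd hKts
  refine ⟨(posDef_transpose_mul_self_add_smul_one hlam Υd).isUnit,
    (posDef_transpose_mul_self_add_smul_one hlam Υs).isUnit, ?_⟩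
  have hd := (isSymm_transpose_mul_self_add_smul_one lam Υd).inv
  have hs := (isSymm_transpose_mul_self_add_smul_one lam Υs).inv
  rw [trace_transpose_sub_mul_sub, trace_transpose_mul_eq_trace_gram,
    trace_transpose_mul_eq_trace_gram, trace_transpose_mul_eq_trace_gram, hd.eq, hs.eq]
end

section
/- Let (Ω, 𝒜, P) be a probability space, X : Ω → Fin K a measurable random variable with P(X = j) > 0 for every j ∈ Fin K, H a real Hilbert space, and ψ : Ω → H a Bochner-integrable map. Define the linear operator C_{YX} : ℝ^K → H by C_{YX}(v) = ∫_Ω v_{X(ω)} · ψ(ω) dP(ω), and let C_{XX} : ℝ^K → ℝ^K be the diagonal operator with j-th diagonal entry P(X = j) (which is invertible). Then for every j ∈ Fin K, (C_{YX} ∘ C_{XX}⁻¹)(e_j) = (1 / P(X = j)) · ∫_{{X = j}} ψ dP, i.e., the conditional embedding operator C_{YX} C_{XX}⁻¹ maps the one-hot vector e_j to the conditional expectation of ψ given the event {X = j}. -/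
open MeasureTheory

namespace Matrix

theorem inv_diagonal_of_ne_zero {n K : Type*} [Fintype n] [DecidableEq n] [Field K]
    {v : n → K} (hv : ∀ i, v i ≠ 0) : (diagonal v)⁻¹ = diagonal fun i => (v i)⁻¹ := by
  refine inv_eq_right_inv ?_
  rw [diagonal_mul_diagonal, ← diagonal_one]
  exact congrArg diagonal (funext fun i => mul_inv_cancel₀ (hv i))

theorem inv_diagonal_mulVec_single_one {n K : Type*} [Fintype n] [DecidableEq n]
    [Field K] {v : n → K} (hv : ∀ i, v i ≠ 0) (j : n) :
    (diagonal v)⁻¹ *ᵥ Pi.single j 1 = Pi.single j (v j)⁻¹ := by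
  rw [inv_diagonal_of_ne_zero hv, diagonal_mulVec_single, mul_one]

end Matrix

theorem MeasureTheory.integral_single_comp_smul {Ω ι E : Type*} [MeasurableSpace Ω]
    {μ : Measure Ω} [DecidableEq ι] [NormedAddCommGroup E] [NormedSpace ℝ E]
    {X : Ω → ι} {j : ι} (hj : MeasurableSet {ω | X ω = j}) (c : ℝ) (ψ : Ω → E) :
    ∫ ω, (Pi.single j c : ι → ℝ) (X ω) • ψ ω ∂μ = c • ∫ ω in {ω | X ω = j}, ψ ω ∂μ := by
  have h_indicator : (fun ω => (Pi.single j c : ι → ℝ) (X ω) • ψ ω) =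
      {ω | X ω = j}.indicator fun ω => c • ψ ω := by
    funext ω
    by_cases hω : X ω = j <;> simp [hω]
  rw [h_indicator, integral_indicator hj, integral_smul]

theorem condEmbedding_one_hot_eq_condexp_general
    {Ω : Type*} [MeasurableSpace Ω] (P : Measure Ω) [IsProbabilityMeasure P]
    {K : ℕ} (X : Ω → Fin K) (hX : Measurable X)
    (hpos : ∀ j : Fin K, 0 < P {ω | X ω = j})
    {H : Type*} [NormedAddCommGroup H] [InnerProductSpace ℝ H]
    (ψ : Ω → H)
    (CYX : (Fin K → ℝ) → H) (hCYX : ∀ v, CYX v = ∫ ω, v (X ω) • ψ ω ∂P)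
    (CXX : Matrix (Fin K) (Fin K) ℝ)
    (hCXX : CXX = Matrix.diagonal fun j : Fin K => (P {ω | X ω = j}).toReal) :
    IsUnit CXX ∧
    ∀ j : Fin K, CYX (CXX⁻¹.mulVec (Pi.single j 1)) =
      ((P {ω | X ω = j}).toReal)⁻¹ • ∫ ω in {ω | X ω = j}, ψ ω ∂P := by
  have h_prob_ne_zero : ∀ j : Fin K, (P {ω | X ω = j}).toReal ≠ 0 := fun j =>
    (ENNReal.toReal_pos (hpos j).ne' (measure_ne_top P _)).ne'
  subst hCXX
  refine ⟨Matrix.isUnit_diagonal.2 (Pi.isUnit_iff.2 fun j => (h_prob_ne_zero j).isUnit),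
    fun j => ?_⟩
  rw [Matrix.inv_diagonal_mulVec_single_one h_prob_ne_zero, hCYX,
    integral_single_comp_smul (hX (measurableSet_singleton j))]

/-- For a finite conditioning domain with the Kronecker delta kernel (one-hot feature
map), the conditional embedding operator `C_{YX} C_{XX}⁻¹` maps the one-hot vector
`e_j` to the conditional expectation of `ψ` given the event `{X = j}`. -/
theorem condEmbedding_one_hot_eq_condexp
    {Ω : Type*} [MeasurableSpace Ω] (P : Measure Ω) [IsProbabilityMeasure P]
    {K : ℕ} (X : Ω → Fin K) (hX : Measurable X)
    (hpos : ∀ j : Fin K, 0 < P {ω | X ω = j})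
    {H : Type*} [NormedAddCommGroup H] [InnerProductSpace ℝ H] [CompleteSpace H]
    (ψ : Ω → H) (hψ : Integrable ψ P)
    (CYX : (Fin K → ℝ) → H) (hCYX : ∀ v, CYX v = ∫ ω, v (X ω) • ψ ω ∂P)
    (CXX : Matrix (Fin K) (Fin K) ℝ)
    (hCXX : CXX = Matrix.diagonal fun j : Fin K => (P {ω | X ω = j}).toReal) :
    IsUnit CXX ∧
    ∀ j : Fin K, CYX (CXX⁻¹.mulVec (Pi.single j 1)) =
      ((P {ω | X ω = j}).toReal)⁻¹ • ∫ ω in {ω | X ω = j}, ψ ω ∂P :=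
  condEmbedding_one_hot_eq_condexp_general P X hX hpos ψ CYX hCYX CXX hCXX
end
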